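/- arXiv:2008.06379 — 2 statements merged into one kernel-verified Lean document; each statement's English description precedes it below -/
import Mathlib

section
/- Let G be a group generated by a finite set A and let H be a subgroup of G. Suppose L is a regular language over A such that every word w ∈ L represents an element of H. If k is the number of states of a (pruned) finite state automaton accepting L in which every state lies on an accepting path, then for every w ∈ L and every prefix u of w, the group element represented by u lies within distance k of H in the word metric on G. -/
open Classical

/-- Evaluation in `G` of a word over the alphabet `A`. -/
def wordEval {G : Type} [Group G] {A : Type} (π : A → G) (w : List A) : G :=
  (w.map π).prod

/-- `π : A → G` generates `G` (positive words suffice; the generating set is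
assumed symmetric, see `SymmetricGen`). -/
def Generates {G : Type} [Group G] {A : Type} (π : A → G) : Prop :=
  ∀ g : G, ∃ w : List A, wordEval π w = g

/-- The generating set is symmetric: `A = A⁻¹`. -/
def SymmetricGen {G : Type} [Group G] {A : Type} (π : A → G) : Prop :=
  ∀ a : A, ∃ b : A, π b = (π a)⁻¹

/-- The word length of `g` with respect to the generating map `π`. -/
noncomputable def wordLength {G : Type} [Group G] {A : Type} (π : A → G) (g : G) : ℕ :=
  sInf {n : ℕ | ∃ w : List A, w.length = n ∧ wordEval π w = g}

/-- The word metric on `G` induced by the generating map `π`. -/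
noncomputable def wordDist {G : Type} [Group G] {A : Type} (π : A → G) (g h : G) : ℕ :=
  wordLength π (g⁻¹ * h)

/-!
The suffix `t` of an accepted word `u ++ t` leads from the state reached by `u` to an accept
state. Cutting loops out of `t` gives a word `v` with `|v| < k` doing the same, so `u ++ v` is
accepted, `wordEval π (u ++ v) ∈ H`, and `wordEval π v` moves `wordEval π u` into `H` in fewer
than `k` steps.
-/

section

variable {G : Type} [Group G] {A : Type} (π : A → G)

theorem wordEval_append (u v : List A) :
    wordEval π (u ++ v) = wordEval π u * wordEval π v := by
  simp only [wordEval, List.map_append, List.prod_append]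

theorem wordLength_wordEval_le_length (v : List A) : wordLength π (wordEval π v) ≤ v.length :=
  Nat.sInf_le ⟨v, rfl, rfl⟩

end

theorem DFA.exists_length_lt_card_evalFrom_eq {α σ : Type} [Fintype σ] (M : DFA α σ) (s : σ)
    (x : List α) : ∃ y : List α, y.length < Fintype.card σ ∧ M.evalFrom s y = M.evalFrom s x := by
  by_cases hlen : x.length < Fintype.card σ
  · exact ⟨x, hlen, rfl⟩
  obtain ⟨q, a, b, c, hx, -, hb, ha, hbq, -⟩ := M.evalFrom_split (le_of_not_gt hlen) rfl
  have hshorter : (a ++ c).length < x.length := by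
    simp only [hx, List.length_append]
    have := List.length_pos_iff.2 hb
    omega
  obtain ⟨y, hy, hyx⟩ := M.exists_length_lt_card_evalFrom_eq s (a ++ c)
  refine ⟨y, hy, ?_⟩
  rw [hyx, hx, M.evalFrom_of_append, M.evalFrom_of_append, M.evalFrom_of_append, ha, hbq]
termination_by x.length
decreasing_by exact hshorter

theorem prefix_close_to_subgroup_of_pruned_general {G : Type} [Group G] {A : Type}
    (π : A → G) (H : Subgroup G) (L : Language A)
    (hLH : ∀ w ∈ L, wordEval π w ∈ H)
    (σ : Type) [Fintype σ] (M : DFA A σ) (hacc : M.accepts = L)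
    (k : ℕ) (hk : k = Fintype.card σ) :
    ∀ w ∈ L, ∀ u : List A, u <+: w →
      ∃ h ∈ H, wordLength π ((wordEval π u)⁻¹ * h) ≤ k := by
  rintro _ hw u ⟨t, rfl⟩
  obtain ⟨v, hv, hvt⟩ := M.exists_length_lt_card_evalFrom_eq (M.eval u) t
  have heval : M.eval (u ++ v) = M.eval (u ++ t) := by
    simp only [DFA.eval, M.evalFrom_of_append]
    exact hvt
  have huv : u ++ v ∈ L := by
    rw [← hacc] at hw ⊢
    rwa [DFA.mem_accepts, heval]
  refine ⟨wordEval π (u ++ v), hLH _ huv, ?_⟩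
  rw [wordEval_append, inv_mul_cancel_left]
  exact (wordLength_wordEval_le_length π v).trans (by omega)

/-- If `L` is a regular language all of whose words represent
elements of `H`, accepted by a pruned automaton with `k` states, then every
prefix of a word of `L` represents an element within distance `k` of `H`. -/
theorem prefix_close_to_subgroup_of_pruned {G : Type} [Group G] {A : Type} [Fintype A]
    (π : A → G) (hgen : Generates π) (H : Subgroup G) (L : Language A)
    (hLH : ∀ w ∈ L, wordEval π w ∈ H)
    (σ : Type) [Fintype σ] (M : DFA A σ) (hacc : M.accepts = L)
    (hpruned : ∀ s : σ, ∃ u v : List A,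
      M.evalFrom M.start u = s ∧ M.evalFrom s v ∈ M.accept)
    (k : ℕ) (hk : k = Fintype.card σ) :
    ∀ w ∈ L, ∀ u : List A, u <+: w →
      ∃ h ∈ H, wordLength π ((wordEval π u)⁻¹ * h) ≤ k :=
  prefix_close_to_subgroup_of_pruned_general π H L hLH σ M hacc k hk
end

section
/- Let G be a group with finite generating set A, let H ≤ G, and suppose the language L_H of all geodesic words over A representing elements of H is regular and there is a Morse gauge M such that every word of L_H is an M-Morse geodesic word in Cay(G,A). Then H is a stable subgroup: there exist a Morse gauge M and k ≥ 0 such that for every h ∈ H, every geodesic in Cay(G,A) from e to h is M-Morse and contained in the k-neighborhood of H. -/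
open Classical

/-- A Morse gauge: a function `M : (k, c) ↦ M(k,c)`. -/
def MorseGauge : Type := ℝ → ℝ → ℝ

/-- `q : {0,…,n} → G` is a discrete `(k,c)`-quasi-geodesic in the Cayley
graph of `G` with respect to `π`. -/
noncomputable def IsDiscreteQG {G : Type} [Group G] {A : Type} (π : A → G)
    (k c : ℝ) (q : ℕ → G) (n : ℕ) : Prop :=
  ∀ i ≤ n, ∀ j ≤ n,
    (1 / k) * |(i : ℝ) - (j : ℝ)| - c ≤ (wordDist π (q i) (q j) : ℝ) ∧
    (wordDist π (q i) (q j) : ℝ) ≤ k * |(i : ℝ) - (j : ℝ)| + c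

/-- `q : {0,…,n} → G` is a discrete geodesic in the Cayley graph. -/
def IsDiscreteGeodesic {G : Type} [Group G] {A : Type} (π : A → G)
    (q : ℕ → G) (n : ℕ) : Prop :=
  ∀ i ≤ n, ∀ j ≤ n, wordDist π (q i) (q j) = Nat.dist i j

/-- The discrete path `q : {0,…,n} → G` is `M`-Morse: every discrete
`(k,c)`-quasi-geodesic with endpoints on `q` stays within `M k c` of the
subsegment of `q` between those endpoints. -/
def IsMorsePath {G : Type} [Group G] {A : Type} (π : A → G)
    (M : MorseGauge) (q : ℕ → G) (n : ℕ) : Prop :=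
  ∀ k c : ℝ, 1 ≤ k → 0 ≤ c →
    ∀ (p : ℕ → G) (m : ℕ), IsDiscreteQG π k c p m →
      ∀ i j : ℕ, i ≤ j → j ≤ n → p 0 = q i → p m = q j →
        ∀ l ≤ m, ∃ i' : ℕ, i ≤ i' ∧ i' ≤ j ∧ (wordDist π (p l) (q i') : ℝ) ≤ M k c

/-- The path in the Cayley graph labeled by the word `w`, starting at the
identity: `i ↦` the evaluation of the `i`-th prefix of `w`. -/
def wordPath {G : Type} [Group G] {A : Type} (π : A → G) (w : List A) (i : ℕ) : G :=
  wordEval π (w.take i)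

/-- `w` is a geodesic word: its length realizes the word length of the element
it represents. -/
def IsGeodesicWord {G : Type} [Group G] {A : Type} (π : A → G) (w : List A) : Prop :=
  w.length = wordLength π (wordEval π w)

/-- The path labeled by `w` is a `(B; M)`-local Morse geodesic: every subpath
of length at most `B` is an `M`-Morse (geodesic) path. -/
def IsLocalMorseWord {G : Type} [Group G] {A : Type} (π : A → G)
    (M : MorseGauge) (B : ℝ) (w : List A) : Prop :=
  ∀ i j : ℕ, i ≤ j → j ≤ w.length → (j : ℝ) - (i : ℝ) ≤ B →
    IsMorsePath π M (fun t => wordPath π w (i + t)) (j - i)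

/-- `q : {0,…,n} → G` is a `(B; M; k, c)`-local Morse quasi-geodesic. -/
noncomputable def IsLocalMorseQG {G : Type} [Group G] {A : Type} (π : A → G)
    (B : ℝ) (M : MorseGauge) (k c : ℝ) (q : ℕ → G) (n : ℕ) : Prop :=
  ∀ i j : ℕ, i ≤ j → j ≤ n → (j : ℝ) - (i : ℝ) ≤ B →
    IsDiscreteQG π k c (fun t => q (i + t)) (j - i) ∧
    IsMorsePath π M (fun t => q (i + t)) (j - i)

/-- The Cayley graph of `G` with respect to `π` has the Morse local-to-global
property: local Morse quasi-geodesics of sufficiently large local scale are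
global Morse quasi-geodesics. -/
noncomputable def MorseLocalToGlobal {G : Type} [Group G] {A : Type} (π : A → G) : Prop :=
  ∀ (M : MorseGauge) (k c : ℝ), 1 ≤ k → 0 ≤ c →
    ∃ (B : ℝ) (M' : MorseGauge) (k' c' : ℝ), 0 ≤ B ∧ 1 ≤ k' ∧ 0 ≤ c' ∧
      ∀ (q : ℕ → G) (n : ℕ), IsLocalMorseQG π B M k c q n →
        IsDiscreteQG π k' c' q n ∧ IsMorsePath π M' q n

/-- `H` is `(M,k)`-stable in the Cayley graph of `G` with respect to `π`:
every geodesic word from the identity to an element of `H` is `M`-Morse and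
all its vertices lie within distance `k` of `H`. -/
def IsStable {G : Type} [Group G] {A : Type} (π : A → G)
    (H : Subgroup G) (M : MorseGauge) (k : ℕ) : Prop :=
  ∀ h ∈ H, ∀ w : List A, wordEval π w = h → IsGeodesicWord π w →
    IsMorsePath π M (wordPath π w) w.length ∧
    ∀ i ≤ w.length, ∃ h' ∈ H, wordDist π (wordPath π w i) h' ≤ k

/-!
The Morse half of stability is the hypothesis itself. For the neighbourhood half, let `h ∈ H`
and let `w` be a geodesic word for `h`, so `w ∈ L_H`. Any prefix of `w` leads a finite automaton
for `L_H` to a state from which an accept state is reachable, and hence reachable by a word of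
length at most a bound `k` that depends only on the automaton. Appending that word to the prefix
gives a word of `L_H`, so the vertex of the prefix is within `k` of an element of `H`.
-/

theorem DFA.exists_length_le_of_append_mem_accepts {α σ : Type*} [Fintype σ] (M : DFA α σ) :
    ∃ N : ℕ, ∀ u v : List α, u ++ v ∈ M.accepts →
      ∃ v' : List α, v'.length ≤ N ∧ u ++ v' ∈ M.accepts := by
  have hstate : ∀ s : σ, ∃ n : ℕ, ∀ v : List α, M.evalFrom s v ∈ M.accept →
      ∃ v' : List α, v'.length ≤ n ∧ M.evalFrom s v' ∈ M.accept := by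
    intro s
    rcases Classical.em (∃ v, M.evalFrom s v ∈ M.accept) with ⟨v, hv⟩ | hco
    · exact ⟨v.length, fun _ _ => ⟨v, le_rfl, hv⟩⟩
    · exact ⟨0, fun v hv => (hco ⟨v, hv⟩).elim⟩
  choose n hn using hstate
  refine ⟨Finset.univ.sup n, fun u v huv => ?_⟩
  rw [DFA.mem_accepts, DFA.eval, DFA.evalFrom_of_append] at huv
  obtain ⟨v', hlen, hv'⟩ := hn _ v huv
  refine ⟨v', hlen.trans (Finset.le_sup (Finset.mem_univ _)), ?_⟩
  rwa [DFA.mem_accepts, DFA.eval, DFA.evalFrom_of_append]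

theorem Language.IsRegular.exists_length_le_of_append_mem {α : Type*} {L : Language α}
    (hL : L.IsRegular) :
    ∃ N : ℕ, ∀ u v : List α, u ++ v ∈ L → ∃ v' : List α, v'.length ≤ N ∧ u ++ v' ∈ L := by
  obtain ⟨σ, _, M, rfl⟩ := hL
  exact M.exists_length_le_of_append_mem_accepts

section WordMetric

variable {G : Type} [Group G] {A : Type} (π : A → G)

theorem wordLength_wordEval_le (w : List A) : wordLength π (wordEval π w) ≤ w.length :=
  Nat.sInf_le ⟨w, rfl, rfl⟩

theorem wordDist_wordEval_append (u v : List A) :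
    wordDist π (wordEval π u) (wordEval π (u ++ v)) = wordLength π (wordEval π v) := by
  simp only [wordDist, wordEval, List.map_append, List.prod_append, inv_mul_cancel_left]

end WordMetric

theorem stable_of_regular_morse_general {G : Type} [Group G] {A : Type}
    (π : A → G)
    (H : Subgroup G) (M : MorseGauge)
    (hreg : Language.IsRegular
      ({w : List A | IsGeodesicWord π w ∧ wordEval π w ∈ H} : Language A))
    (hmorse : ∀ w : List A, IsGeodesicWord π w → wordEval π w ∈ H →
      IsMorsePath π M (wordPath π w) w.length) :
    ∃ (M' : MorseGauge) (k : ℕ), IsStable π H M' k := by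
  obtain ⟨k, hcomplete⟩ := hreg.exists_length_le_of_append_mem
  refine ⟨M, k, ?_⟩
  rintro h hh w rfl hgeo
  refine ⟨hmorse w hgeo hh, fun i _ => ?_⟩
  obtain ⟨v, hv, -, hH⟩ := hcomplete (w.take i) (w.drop i)
    (by rw [List.take_append_drop]; exact ⟨hgeo, hh⟩)
  refine ⟨_, hH, ?_⟩
  calc wordDist π (wordPath π w i) (wordEval π (w.take i ++ v))
      = wordLength π (wordEval π v) := wordDist_wordEval_append π _ v
    _ ≤ k := (wordLength_wordEval_le π v).trans hv

/-- If the language `L_H` of geodesic words representing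
elements of `H` is regular and all its words are `M`-Morse, then `H` is a
stable subgroup. -/
theorem stable_of_regular_morse {G : Type} [Group G] {A : Type} [Fintype A]
    (π : A → G) (hgen : Generates π) (hsym : SymmetricGen π)
    (H : Subgroup G) (M : MorseGauge)
    (hreg : Language.IsRegular
      ({w : List A | IsGeodesicWord π w ∧ wordEval π w ∈ H} : Language A))
    (hmorse : ∀ w : List A, IsGeodesicWord π w → wordEval π w ∈ H →
      IsMorsePath π M (wordPath π w) w.length) :
    ∃ (M' : MorseGauge) (k : ℕ), IsStable π H M' k :=
  stable_of_regular_morse_general π H M hreg hmorse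
end
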